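/- arXiv:1904.03477 — 3 statements merged into one kernel-verified Lean document; each statement's English description precedes it below -/
import Mathlib

section
/- Let X have pmf P(X=i) = i/T_F² for 1 ≤ i ≤ T_F and (2T_F−i)/T_F² for T_F < i ≤ 2T_F−1, and let T be independent geometric with P(T=j) = (1−ν)ν^{j−1}, 0 ≤ ν < 1. Then P(X < T) = h(ν)/T_F², where h(x) = (x − 2x^{T_F+1} + x^{2T_F+1})/(1−x)². -/
lemma key_sum (ν : ℝ) (hν : ν ≠ 1) :
    ∀ n : ℕ, 1 ≤ n →
      ∑ i ∈ Finset.Icc 1 (2 * n - 1), (if i ≤ n then (i : ℝ) else 2 * n - i) * ν ^ i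
        = (ν - 2 * ν ^ (n + 1) + ν ^ (2 * n + 1)) / (1 - ν) ^ 2 := by
  have hν1 : (1 : ℝ) - ν ≠ 0 := sub_ne_zero.mpr (Ne.symm hν)
  have hν2 : ν - 1 ≠ 0 := sub_ne_zero.mpr hν
  refine Nat.le_induction ?_ ?_
  · norm_num
    field_simp
    ring
  · intro n hn IH
    have h1 : 2 * (n + 1) - 1 = 2 * n - 1 + 1 + 1 := by omega
    rw [h1, Finset.sum_Icc_succ_top (by omega), Finset.sum_Icc_succ_top (by omega)]
    have h2 : 2 * n - 1 + 1 = 2 * n := by omega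
    rw [h2]
    have e3 : ∑ i ∈ Finset.Icc 1 (2 * n - 1),
        (if i ≤ n + 1 then (i : ℝ) else 2 * ((n + 1 : ℕ) : ℝ) - i) * ν ^ i
        = ∑ i ∈ Finset.Icc 1 (2 * n - 1),
          ((if i ≤ n then (i : ℝ) else 2 * n - i) * ν ^ i
            + (if n < i then (2 : ℝ) else 0) * ν ^ i) := by
      refine Finset.sum_congr rfl ?_
      intro i hi
      simp only [Finset.mem_Icc] at hi
      by_cases h : i ≤ n
      · have h' : i ≤ n + 1 := by omega
        simp [h, h', not_lt.mpr h]
      · have h' : n < i := not_le.mp h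
        by_cases h2 : i = n + 1
        · subst h2
          simp [h, h']
          push_cast
          ring
        · have h3 : ¬ i ≤ n + 1 := by omega
          simp [h3, h, h']
          push_cast
          ring
    rw [e3, Finset.sum_add_distrib, IH]
    have e4 : ∑ i ∈ Finset.Icc 1 (2 * n - 1), (if n < i then (2 : ℝ) else 0) * ν ^ i
        = ∑ i ∈ Finset.Ico (n + 1) (2 * n), 2 * ν ^ i := by
      simp only [ite_mul, zero_mul]
      rw [← Finset.sum_filter]
      congr 1
      ext i
      simp only [Finset.mem_filter, Finset.mem_Icc, Finset.mem_Ico]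
      omega
    rw [e4, ← Finset.mul_sum, geom_sum_Ico hν (by omega)]
    have hc1 : (if 2 * n ≤ n + 1 then ((2 * n : ℕ) : ℝ) else 2 * ((n + 1 : ℕ) : ℝ) - (2 * n : ℕ)) = 2 := by
      split_ifs with h
      · have : n = 1 := by omega
        subst this; norm_num
      · push_cast; ring
    have hc2 : (if 2 * n + 1 ≤ n + 1 then ((2 * n + 1 : ℕ) : ℝ)
        else 2 * ((n + 1 : ℕ) : ℝ) - (2 * n + 1 : ℕ)) = 1 := by
      split_ifs with h
      · omega
      · push_cast; ring
    rw [hc1, hc2]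
    field_simp
    ring

theorem prob_X_lt_T (T : ℕ) (hT : 1 ≤ T) (ν : ℝ) (hν0 : 0 ≤ ν) (hν1 : ν < 1)
    (p : ℕ → ℝ)
    (hp1 : ∀ i, 1 ≤ i → i ≤ T → p i = (i : ℝ) / (T : ℝ) ^ 2)
    (hp2 : ∀ i, T < i → i ≤ 2 * T - 1 → p i = (2 * (T : ℝ) - (i : ℝ)) / (T : ℝ) ^ 2) :
    ∑ i ∈ Finset.Icc 1 (2 * T - 1), p i * ν ^ i =
      ((ν - 2 * ν ^ (T + 1) + ν ^ (2 * T + 1)) / (1 - ν) ^ 2) / (T : ℝ) ^ 2 := by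
  have h1 : ∑ i ∈ Finset.Icc 1 (2 * T - 1), p i * ν ^ i
      = ∑ i ∈ Finset.Icc 1 (2 * T - 1),
        ((if i ≤ T then (i : ℝ) else 2 * T - i) * ν ^ i) / (T : ℝ) ^ 2 := by
    refine Finset.sum_congr rfl ?_
    intro i hi
    simp only [Finset.mem_Icc] at hi
    by_cases h : i ≤ T
    · rw [hp1 i hi.1 h]; simp [h]; ring
    · rw [hp2 i (not_le.mp h) hi.2]; simp [h]; ring
  rw [h1, ← Finset.sum_div, key_sum ν hν1.ne]
  omega
end

section
/- Let X have pmf P(X=i)=i/T_F² for 1≤i≤T_F and (2T_F−i)/T_F² for T_F<i≤2T_F−1, and T independent geometric with P(T>j)=ν^j, 0≤ν<1. Then E[X·max(0, T−X)] = ν·h′(ν)/(T_F²(1−ν)), where h(x)=(x−2x^{T_F+1}+x^{2T_F+1})/(1−x)² and h′ is its derivative. -/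
open Finset

lemma key_sum_geom (T : ℕ) (x : ℝ) :
    ∑ i ∈ Finset.Icc 1 (2*T-1), (if i ≤ T then (i:ℝ) else 2*(T:ℝ) - i) * x^i
      = x * (∑ k ∈ Finset.range T, x^k)^2 := by
  induction T with
  | zero => simp
  | succ T ih =>
    rcases Nat.eq_zero_or_pos T with rfl | hT
    · simp
    · have e : 2*(T+1)-1 = (2*T-1)+1+1 := by omega
      have e2 : 2*T-1+1 = 2*T := by omega
      rw [e, Finset.sum_Icc_succ_top (by omega), Finset.sum_Icc_succ_top (by omega), e2]
      have hsplit : ∑ i ∈ Icc 1 (2*T-1), (if i ≤ T+1 then (i:ℝ) else 2*((T:ℕ)+1:ℕ) - i) * x^i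
          = (∑ i ∈ Icc 1 (2*T-1), (if i ≤ T then (i:ℝ) else 2*(T:ℝ) - i) * x^i)
            + ∑ i ∈ Icc 1 (2*T-1), (if T+1 ≤ i then 2*x^i else 0) := by
        rw [← Finset.sum_add_distrib]
        apply Finset.sum_congr rfl
        intro i hi
        simp only [Finset.mem_Icc] at hi
        by_cases h1 : i ≤ T
        · rw [if_pos (by omega), if_pos h1, if_neg (by omega)]; ring
        · by_cases h2 : i = T + 1
          · subst h2
            rw [if_pos le_rfl, if_neg h1, if_pos le_rfl]
            push_cast; ring
          · rw [if_neg (by omega), if_neg h1, if_pos (by omega)]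
            push_cast; ring
      rw [hsplit]
      have hfilter : ∑ i ∈ Icc 1 (2*T-1), (if T+1 ≤ i then 2*x^i else 0)
          = ∑ i ∈ Icc (T+1) (2*T-1), 2*x^i := by
        rw [← Finset.sum_filter]
        congr 1
        ext a
        simp only [Finset.mem_filter, Finset.mem_Icc]
        omega
      rw [hfilter]
      have hb1 : (if 2*T ≤ T+1 then ((2*T : ℕ):ℝ) else 2*((T:ℕ)+1:ℕ) - (2*T:ℕ)) * x^(2*T)
          = 2*x^(2*T) := by
        split_ifs with h
        · have : T = 1 := by omega
          subst this; norm_num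
        · push_cast; ring
      have hb2 : (if 2*T+1 ≤ T+1 then ((2*T+1 : ℕ):ℝ) else 2*((T:ℕ)+1:ℕ) - (2*T+1:ℕ)) * x^(2*T+1)
          = x^(2*T+1) := by
        rw [if_neg (by omega)]; push_cast; ring
      have hmerge : (∑ i ∈ Icc (T+1) (2*T-1), 2*x^i) + 2*x^(2*T)
          = ∑ i ∈ Icc (T+1) (2*T), 2*x^i := by
        have h' := Finset.sum_Icc_succ_top (a := T+1) (b := 2*T-1) (by omega) (fun i => 2*x^i)
        rw [e2] at h'
        exact h'.symm
      have hgeom : ∑ i ∈ Icc (T+1) (2*T), 2*x^i = 2 * x^(T+1) * ∑ k ∈ range T, x^k := by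
        rw [← Finset.Ico_add_one_right_eq_Icc, Finset.sum_Ico_eq_sum_range]
        have : 2*T+1 - (T+1) = T := by omega
        rw [this, Finset.mul_sum]
        apply Finset.sum_congr rfl
        intro k _
        rw [pow_add]; ring
      rw [Finset.sum_range_succ]
      push_cast at hb1 hb2 ⊢
      rw [hb1, hb2]
      rw [add_assoc, add_assoc, ← add_assoc (∑ i ∈ Icc (T+1) (2*T-1), 2*x^i), hmerge, hgeom, ih]
      ring

theorem mean_X_waiting (T : ℕ) (hT : 1 ≤ T) (ν : ℝ) (hν0 : 0 ≤ ν) (hν1 : ν < 1)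
    (p : ℕ → ℝ)
    (hp1 : ∀ i, 1 ≤ i → i ≤ T → p i = (i : ℝ) / (T : ℝ) ^ 2)
    (hp2 : ∀ i, T < i → i ≤ 2 * T - 1 → p i = (2 * (T : ℝ) - (i : ℝ)) / (T : ℝ) ^ 2)
    (h : ℝ → ℝ) (hh : ∀ x, h x = (x - 2 * x ^ (T + 1) + x ^ (2 * T + 1)) / (1 - x) ^ 2) :
    ∑ i ∈ Finset.Icc 1 (2 * T - 1), (i : ℝ) * p i * (∑' j : ℕ, ν ^ (i + j)) =
      ν * deriv h ν / ((T : ℝ) ^ 2 * (1 - ν)) := by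
  set c : ℕ → ℝ := fun i => if i ≤ T then (i:ℝ) else 2*(T:ℝ) - i with hc
  have hT0 : (T : ℝ) ≠ 0 := by positivity
  have hν1' : (1 : ℝ) - ν ≠ 0 := by linarith
  -- h agrees with the polynomial away from 1
  have heq : ∀ x : ℝ, x ≠ 1 → h x = ∑ i ∈ Icc 1 (2*T-1), c i * x^i := by
    intro x hx
    rw [hh]
    have := key_sum_geom T x
    rw [geom_sum_eq hx] at this
    rw [show (∑ i ∈ Icc 1 (2*T-1), c i * x^i) = x * ((x^T - 1)/(x-1))^2 from this]
    have hx1 : x - 1 ≠ 0 := sub_ne_zero.mpr hx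
    have h1x : (1:ℝ) - x ≠ 0 := fun hcon => hx (by linarith [sub_eq_zero.mp hcon])
    field_simp
    ring
  -- compute the derivative
  have hde : deriv h ν = ∑ i ∈ Icc 1 (2*T-1), c i * ((i:ℝ) * ν^(i-1)) := by
    have hev : h =ᶠ[nhds ν] fun x => ∑ i ∈ Icc 1 (2*T-1), c i * x^i :=
      (eventually_ne_nhds (ne_of_lt hν1)).mono fun x hx => heq x hx
    rw [hev.deriv_eq,
      deriv_fun_sum (fun i _ => ((differentiable_pow i).differentiableAt).const_mul (c i))]
    apply Finset.sum_congr rfl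
    intro i _
    rw [deriv_const_mul _ (differentiable_pow i).differentiableAt, deriv_pow_field]
  rw [hde, Finset.mul_sum, Finset.sum_div]
  apply Finset.sum_congr rfl
  intro i hi
  simp only [Finset.mem_Icc] at hi
  have htsum : (∑' j : ℕ, ν ^ (i + j)) = ν^i * (1-ν)⁻¹ := by
    simp_rw [pow_add]
    rw [tsum_mul_left, tsum_geometric_of_lt_one hν0 hν1]
  have hpci : p i = c i / (T:ℝ)^2 := by
    by_cases h1 : i ≤ T
    · rw [hp1 i hi.1 h1, hc]; simp [h1]
    · rw [hp2 i (by omega) hi.2, hc]; simp [h1]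
  have hpow : ν^i = ν^(i-1) * ν := by
    rw [← pow_succ]
    congr 1
    omega
  rw [htsum, hpci, hpow]
  field_simp
end

section
/- For X and T as above (X with the triangular pmf on {1,…,2T_F−1}, T independent geometric with tail ν^j), the generating function ∑_{i=1}^{2T_F−1} z^i P(X=i) ∑_{j=0}^∞ P(T > i+j) equals h(zν)/(T_F²(1−ν)) for z with |zν| < 1. -/
lemma sumA (x : ℝ) (n : ℕ) :
    (1 - x) ^ 2 * ∑ i ∈ Finset.range n, (i : ℝ) * x ^ i
      = x - n * x ^ n + ((n : ℝ) - 1) * x ^ (n + 1) := by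
  induction n with
  | zero => simp
  | succ n ih =>
    rw [Finset.sum_range_succ, mul_add, ih]
    push_cast
    ring

lemma keylem (x : ℝ) (T : ℕ) (hT : 1 ≤ T) :
    (1 - x) ^ 2 * ((∑ i ∈ Finset.Ioc 0 T, (i : ℝ) * x ^ i)
      + ∑ i ∈ Finset.Ioc T (2 * T - 1), (2 * (T : ℝ) - i) * x ^ i)
      = x - 2 * x ^ (T + 1) + x ^ (2 * T + 1) := by
  have h1 : (∑ i ∈ Finset.Ioc 0 T, (i : ℝ) * x ^ i)
      = ∑ i ∈ Finset.range (T + 1), (i : ℝ) * x ^ i := by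
    have : Finset.range (T + 1) = insert 0 (Finset.Ioc 0 T) := by
      ext i; simp
    rw [this, Finset.sum_insert (by simp)]
    simp
  have h2 : (∑ i ∈ Finset.Ioc T (2 * T - 1), (2 * (T : ℝ) - i) * x ^ i)
      = (∑ k ∈ Finset.Ioc 0 (T - 1), ((T : ℝ) - k) * x ^ k) * x ^ T := by
    rw [Finset.sum_mul]
    apply Finset.sum_nbij' (fun i => i - T) (fun k => k + T)
    · intro i hi; simp at hi ⊢; omega
    · intro k hk; simp at hk ⊢; omega
    · intro i hi; simp at hi ⊢; omega
    · intro k hk; simp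
    · intro i hi
      simp only [Finset.mem_Ioc] at hi
      have hc : (((i - T : ℕ)) : ℝ) = (i : ℝ) - T := by
        push_cast [Nat.cast_sub (le_of_lt hi.1)]; ring
      rw [hc, mul_assoc, ← pow_add, show i - T + T = i by omega]
      ring
  have h2' : (∑ k ∈ Finset.Ioc 0 (T - 1), ((T : ℝ) - k) * x ^ k)
      = (T : ℝ) * (∑ k ∈ Finset.range T, x ^ k)
        - (∑ k ∈ Finset.range T, (k : ℝ) * x ^ k) - T := by
    have hr : Finset.range T = insert 0 (Finset.Ioc 0 (T - 1)) := by
      ext i; simp; omega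
    rw [hr, Finset.sum_insert (by simp), Finset.sum_insert (by simp)]
    have : (∑ k ∈ Finset.Ioc 0 (T - 1), ((T : ℝ) - k) * x ^ k)
        = ∑ k ∈ Finset.Ioc 0 (T - 1), ((T : ℝ) * x ^ k - k * x ^ k) :=
      Finset.sum_congr rfl fun k _ => by ring
    rw [this, Finset.sum_sub_distrib]
    simp only [pow_zero, Nat.cast_zero, zero_mul, zero_add, ← Finset.mul_sum]
    ring
  rw [h1, h2, h2']
  have hA1 := sumA x (T + 1)
  have hA2 := sumA x T
  have hG : (1 - x) * ∑ i ∈ Finset.range T, x ^ i = 1 - x ^ T := by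
    linarith [geom_sum_mul x T]
  have e1 : x ^ (T + 1) = x ^ T * x := by ring
  have e2 : x ^ (T + 1 + 1) = x ^ T * x * x := by ring
  have e3 : x ^ (2 * T + 1) = x ^ T * x ^ T * x := by
    rw [two_mul, pow_add, pow_add]; ring
  push_cast at hA1 hA2
  rw [e1] at hA1 hA2
  rw [e2] at hA1
  rw [e3, e1]
  linear_combination hA1 + ((x : ℝ) ^ T * T * (1 - x)) * hG - x ^ T * hA2

theorem aux_generating_function (T : ℕ) (hT : 1 ≤ T) (ν : ℝ) (hν0 : 0 ≤ ν) (hν1 : ν < 1)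
    (p : ℕ → ℝ)
    (hp1 : ∀ i, 1 ≤ i → i ≤ T → p i = (i : ℝ) / (T : ℝ) ^ 2)
    (hp2 : ∀ i, T < i → i ≤ 2 * T - 1 → p i = (2 * (T : ℝ) - (i : ℝ)) / (T : ℝ) ^ 2)
    (h : ℝ → ℝ) (hh : ∀ x, h x = (x - 2 * x ^ (T + 1) + x ^ (2 * T + 1)) / (1 - x) ^ 2)
    (z : ℝ) (hz : |z * ν| < 1) :
    ∑ i ∈ Finset.Icc 1 (2 * T - 1), z ^ i * p i * (∑' j : ℕ, ν ^ (i + j)) =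
      h (z * ν) / ((T : ℝ) ^ 2 * (1 - ν)) := by
  set x := z * ν with hx
  have hx1 : x < 1 := (abs_lt.mp hz).2
  have h1x : (1 : ℝ) - x ≠ 0 := by linarith
  have h1ν : (1 : ℝ) - ν ≠ 0 := by linarith
  have hT0 : ((T : ℝ)) ≠ 0 := by positivity
  have htsum : ∀ i : ℕ, (∑' j : ℕ, ν ^ (i + j)) = ν ^ i / (1 - ν) := by
    intro i
    simp only [pow_add]
    rw [tsum_mul_left, tsum_geometric_of_lt_one hν0 hν1, div_eq_mul_inv]
  have hicc : Finset.Icc 1 (2 * T - 1) = Finset.Ioc 0 (2 * T - 1) := by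
    ext i; simp; omega
  rw [hicc, ← Finset.sum_Ioc_consecutive _ (Nat.zero_le T) (by omega : T ≤ 2 * T - 1)]
  have hs1 : ∑ i ∈ Finset.Ioc 0 T, z ^ i * p i * (∑' j : ℕ, ν ^ (i + j))
      = (∑ i ∈ Finset.Ioc 0 T, (i : ℝ) * x ^ i) / ((T : ℝ) ^ 2 * (1 - ν)) := by
    rw [Finset.sum_div]
    apply Finset.sum_congr rfl
    intro i hi
    simp only [Finset.mem_Ioc] at hi
    rw [htsum, hp1 i hi.1 hi.2, hx, mul_pow]
    field_simp
  have hs2 : ∑ i ∈ Finset.Ioc T (2 * T - 1), z ^ i * p i * (∑' j : ℕ, ν ^ (i + j))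
      = (∑ i ∈ Finset.Ioc T (2 * T - 1), (2 * (T : ℝ) - i) * x ^ i)
          / ((T : ℝ) ^ 2 * (1 - ν)) := by
    rw [Finset.sum_div]
    apply Finset.sum_congr rfl
    intro i hi
    simp only [Finset.mem_Ioc] at hi
    rw [htsum, hp2 i hi.1 hi.2, hx, mul_pow]
    field_simp
  rw [hs1, hs2, ← add_div, hh]
  rw [div_div]
  rw [div_eq_div_iff (by positivity) (by positivity)]
  · linear_combination ((T : ℝ) ^ 2 * (1 - ν)) * keylem x T hT
end
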